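/- If X = (X_k)_{k=0,...,n} is a nonnegative submartingale with E[X_n log X_n] < ∞ (convention 0 log 0 = 0), then E[X̄_n] ≤ (e/(e−1))·(1 + E[X_n log X_n]), where X̄_n = max{X_0, ..., X_n}. -/

import Mathlib

/-!
With `M` the running maximum and `N = max M 1`, the layer-cake formula gives
`E[N - 1] = ∫_1^∞ P(M ≥ t) dt`. Doob's maximal inequality bounds `P(M ≥ t)` by
`E[X_n; M ≥ t] / t`, and integrating back yields `E[N - 1] ≤ E[X_n log N]`. The elementary
inequality `a log b ≤ a log a + b / e` turns this into
`E[N] ≤ 1 + E[X_n log X_n] + E[N] / e`, which rearranges to the claim since `E[M] ≤ E[N]`.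
A nonnegative submartingale a.e. agrees with its positive part, so we may assume `0 ≤ X`
everywhere.
-/

open MeasureTheory Finset

theorem integral_inv_one_add {x : ℝ} (hx : 0 ≤ x) :
    ∫ t in (0 : ℝ)..x, (1 + t)⁻¹ = Real.log (1 + x) := by
  rw [intervalIntegral.integral_comp_add_left (fun t => t⁻¹), integral_inv, add_zero, div_one]
  rw [Set.uIcc_of_le (by linarith)]
  exact fun h => by linarith [h.1]

theorem Real.mul_log_le_mul_log_add_div_exp {a b : ℝ} (ha : 0 ≤ a) (hb : 0 < b) :
    a * Real.log b ≤ a * Real.log a + b / Real.exp 1 := by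
  rcases ha.eq_or_lt with rfl | ha
  · simp only [zero_mul, zero_add]
    positivity
  · have h := Real.exp_one_mul_le_exp (x := Real.log (b / a))
    rw [Real.exp_log (by positivity), Real.log_div hb.ne' ha.ne'] at h
    rw [← sub_le_iff_le_add', ← mul_sub, le_div_iff₀' (Real.exp_pos 1)]
    calc Real.exp 1 * (a * (Real.log b - Real.log a))
        = a * (Real.exp 1 * (Real.log b - Real.log a)) := by ring
      _ ≤ a * (b / a) := mul_le_mul_of_nonneg_left h ha.le
      _ = b := mul_div_cancel₀ b ha.ne'

theorem MeasureTheory.Integrable.finset_sup' {ι Ω : Type*} {m : MeasurableSpace Ω} {μ : Measure Ω}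
    {s : Finset ι} (hs : s.Nonempty) {f : ι → Ω → ℝ} (hf : ∀ i ∈ s, Integrable (f i) μ) :
    Integrable (fun ω => s.sup' hs fun i => f i ω) μ := by
  simp_rw [← Finset.sup'_apply]
  exact Finset.sup'_induction (p := fun g => Integrable g μ) hs f
    (fun _ h₁ _ h₂ => Integrable.sup h₁ h₂) hf

theorem MeasureTheory.lintegral_max_one_sub_one_le {Ω : Type*} {m : MeasurableSpace Ω}
    {μ : Measure Ω} {M Y : Ω → ℝ} (hM : Measurable M) (hY : Measurable Y)
    (htail : ∀ ε, 1 < ε →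
      ENNReal.ofReal ε * μ {ω | ε ≤ M ω} ≤ ∫⁻ ω in {ω | ε ≤ M ω}, ENNReal.ofReal (Y ω) ∂μ) :
    ∫⁻ ω, ENNReal.ofReal (max (M ω) 1 - 1) ∂μ ≤
      ∫⁻ ω, ENNReal.ofReal (Y ω * Real.log (max (M ω) 1)) ∂μ := by
  -- Layer cake for `μ` with weight `1` and for `ν = Y • μ` with weight `(1 + t)⁻¹`, since
  -- `∫ t in 0..N - 1, (1 + t)⁻¹ = log N`; the tail bound compares the two level by level.
  set ν := μ.withDensity fun ω => ENNReal.ofReal (Y ω)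
  have hf_nonneg : ∀ ω, 0 ≤ max (M ω) 1 - 1 := fun ω => sub_nonneg.2 (le_max_right _ _)
  have hf_meas : Measurable fun ω => max (M ω) 1 - 1 := (hM.max measurable_const).sub_const 1
  have hlevel : ∀ t > 0, {ω | t ≤ max (M ω) 1 - 1} = {ω | 1 + t ≤ M ω} := by
    intro t ht
    ext ω
    simp only [Set.mem_ofPred_eq, le_sub_iff_add_le', le_max_iff]
    exact or_iff_left (by linarith)
  calc ∫⁻ ω, ENNReal.ofReal (max (M ω) 1 - 1) ∂μ
      = ∫⁻ t in Set.Ioi 0, μ {ω | t ≤ max (M ω) 1 - 1} :=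
        lintegral_eq_lintegral_meas_le μ (ae_of_all _ hf_nonneg) hf_meas.aemeasurable
    _ ≤ ∫⁻ t in Set.Ioi 0, ν {ω | t ≤ max (M ω) 1 - 1} * ENNReal.ofReal (1 + t)⁻¹ := by
        refine setLIntegral_mono' measurableSet_Ioi fun t (ht : 0 < t) => ?_
        have hS : MeasurableSet {ω | 1 + t ≤ M ω} := measurableSet_le measurable_const hM
        rw [hlevel t ht, withDensity_apply _ hS, ENNReal.ofReal_inv_of_pos (by linarith),
          ← div_eq_mul_inv,
          ENNReal.le_div_iff_mul_le (Or.inl (ENNReal.ofReal_pos.2 (by linarith)).ne')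
            (Or.inl ENNReal.ofReal_ne_top), mul_comm]
        exact htail (1 + t) (by linarith)
    _ = ∫⁻ ω, ENNReal.ofReal (∫ t in (0 : ℝ)..max (M ω) 1 - 1, (1 + t)⁻¹) ∂ν := by
        refine (lintegral_comp_eq_lintegral_meas_le_mul ν (ae_of_all _ hf_nonneg)
          hf_meas.aemeasurable (fun t ht => ?_) ?_).symm
        · refine ContinuousOn.intervalIntegrable fun x hx => ?_
          rw [Set.uIcc_of_le ht.le] at hx
          have : 1 + x ≠ 0 := by linarith [hx.1]
          fun_prop (disch := assumption)
        · filter_upwards [ae_restrict_mem measurableSet_Ioi] with t (ht : 0 < t)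
          positivity
    _ = ∫⁻ ω, ENNReal.ofReal (Real.log (max (M ω) 1)) ∂ν := by
        congr 1 with ω
        rw [integral_inv_one_add (hf_nonneg ω), add_sub_cancel]
    _ = ∫⁻ ω, ENNReal.ofReal (Y ω * Real.log (max (M ω) 1)) ∂μ := by
        rw [lintegral_withDensity_eq_lintegral_mul _ hY.ennreal_ofReal
          (hM.max measurable_const).log.ennreal_ofReal]
        congr 1 with ω
        exact (ENNReal.ofReal_mul' (Real.log_nonneg (le_max_right _ _))).symm

def runningMax {Ω : Type*} (X : ℕ → Ω → ℝ) (n : ℕ) (ω : Ω) : ℝ :=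
  (range (n + 1)).sup' nonempty_range_add_one fun k => X k ω

namespace MeasureTheory.Submartingale

variable {Ω : Type*} {m0 : MeasurableSpace Ω} {μ : Measure Ω} {ℱ : Filtration ℕ m0}
  {X : ℕ → Ω → ℝ}

theorem measurable_runningMax (hX : Submartingale X ℱ μ) (n : ℕ) :
    Measurable (runningMax X n) :=
  measurable_range_sup'' fun k _ => (hX.stronglyMeasurable k).measurable.mono (ℱ.le k) le_rfl

theorem integrable_runningMax (hX : Submartingale X ℱ μ) (n : ℕ) :
    Integrable (runningMax X n) μ :=
  Integrable.finset_sup' _ fun k _ => hX.integrable k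

theorem ofReal_mul_measure_le_runningMax [IsFiniteMeasure μ] (hX : Submartingale X ℱ μ)
    (hnonneg : 0 ≤ X) (n : ℕ) {ε : ℝ} (hε : 0 ≤ ε) :
    ENNReal.ofReal ε * μ {ω | ε ≤ runningMax X n ω} ≤
      ∫⁻ ω in {ω | ε ≤ runningMax X n ω}, ENNReal.ofReal (X n ω) ∂μ := by
  have h := maximal_ineq hX hnonneg (ε := ε.toNNReal) n
  rwa [Real.coe_toNNReal ε hε, ofReal_integral_eq_lintegral_ofReal (hX.integrable n).integrableOn
    (ae_of_all _ (hnonneg n))] at h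

theorem integral_runningMax_le [IsProbabilityMeasure μ] (hX : Submartingale X ℱ μ)
    (hnonneg : 0 ≤ X) (n : ℕ) (hint : Integrable (fun ω => X n ω * Real.log (X n ω)) μ) :
    ∫ ω, runningMax X n ω ∂μ ≤
      Real.exp 1 / (Real.exp 1 - 1) * (1 + ∫ ω, X n ω * Real.log (X n ω) ∂μ) := by
  set N := fun ω => max (runningMax X n ω) 1
  have hNint : Integrable N μ := (hX.integrable_runningMax n).sup (integrable_const 1)
  have hXn_meas : Measurable (X n) := (hX.stronglyMeasurable n).measurable.mono (ℱ.le n) le_rfl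
  have hbound : ∀ ω, X n ω * Real.log (N ω) ≤ X n ω * Real.log (X n ω) + N ω / Real.exp 1 :=
    fun ω => Real.mul_log_le_mul_log_add_div_exp (hnonneg n ω)
      (one_pos.trans_le (le_max_right _ _))
  have hbound_nonneg : ∀ ω, 0 ≤ X n ω * Real.log (X n ω) + N ω / Real.exp 1 := fun ω =>
    (mul_nonneg (hnonneg n ω) (Real.log_nonneg (le_max_right _ _))).trans (hbound ω)
  have hgap_int : Integrable (fun ω => N ω - 1) μ := hNint.sub (integrable_const 1)
  have hbound_int : Integrable (fun ω => X n ω * Real.log (X n ω) + N ω / Real.exp 1) μ :=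
    hint.add (hNint.div_const _)
  have hkey : ∫ ω, (N ω - 1) ∂μ ≤ ∫ ω, (X n ω * Real.log (X n ω) + N ω / Real.exp 1) ∂μ := by
    rw [← ENNReal.ofReal_le_ofReal_iff (integral_nonneg hbound_nonneg),
      ofReal_integral_eq_lintegral_ofReal hgap_int
        (ae_of_all _ fun ω => sub_nonneg.2 (le_max_right _ _)),
      ofReal_integral_eq_lintegral_ofReal hbound_int (ae_of_all _ hbound_nonneg)]
    exact (lintegral_max_one_sub_one_le (hX.measurable_runningMax n) hXn_meas
      fun ε hε => hX.ofReal_mul_measure_le_runningMax hnonneg n (by linarith)).trans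
      (lintegral_mono fun ω => ENNReal.ofReal_le_ofReal (hbound ω))
  rw [integral_sub hNint (integrable_const 1), integral_add hint (hNint.div_const _),
    integral_div, integral_const, probReal_univ, one_smul] at hkey
  have he : 1 < Real.exp 1 := Real.one_lt_exp_iff.2 one_pos
  calc ∫ ω, runningMax X n ω ∂μ ≤ ∫ ω, N ω ∂μ :=
        integral_mono (hX.integrable_runningMax n) hNint fun ω => le_max_left _ _
    _ ≤ Real.exp 1 / (Real.exp 1 - 1) * (1 + ∫ ω, X n ω * Real.log (X n ω) ∂μ) := by
        rw [div_mul_eq_mul_div, le_div_iff₀ (by linarith)]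
        have := mul_le_mul_of_nonneg_right hkey (Real.exp_pos 1).le
        rw [sub_mul, add_mul, div_mul_cancel₀ _ (Real.exp_pos 1).ne'] at this
        linarith

end MeasureTheory.Submartingale

theorem stmt14 {Ω : Type*} {m0 : MeasurableSpace Ω} {μ : Measure Ω} [IsProbabilityMeasure μ]
    (ℱ : Filtration ℕ m0) (X : ℕ → Ω → ℝ) (n : ℕ)
    (hX : Submartingale X ℱ μ) (hpos : ∀ k, 0 ≤ᵐ[μ] X k)
    (hint : Integrable (fun ω => X n ω * Real.log (X n ω)) μ) :
    (∫ ω, (Finset.range (n + 1)).sup' Finset.nonempty_range_add_one (fun k => X k ω) ∂μ)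
      ≤ Real.exp 1 / (Real.exp 1 - 1) *
        (1 + ∫ ω, X n ω * Real.log (X n ω) ∂μ) := by
  have hae : ∀ k, X⁺ k =ᵐ[μ] X k := fun k => by
    filter_upwards [hpos k] with ω hω using max_eq_left hω
  have hmax : runningMax X⁺ n =ᵐ[μ] runningMax X n := by
    filter_upwards [ae_all_iff.2 hae] with ω hω using Finset.sup'_congr _ rfl fun k _ => hω k
  have hlog : (fun ω => X⁺ n ω * Real.log (X⁺ n ω)) =ᵐ[μ] fun ω => X n ω * Real.log (X n ω) := by
    filter_upwards [hae n] with ω hω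
    rw [hω]
  have h := hX.pos.integral_runningMax_le (fun k ω => le_max_right _ _) n (hint.congr hlog.symm)
  rwa [integral_congr_ae hmax, integral_congr_ae hlog] at h
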